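/- arXiv:2510.03849 — 2 statements merged into one kernel-verified Lean document; each statement's English description precedes it below -/
import Mathlib

section
/- Let φ : [0,∞) → [0,∞) be an N-function of class C¹([0,∞)) ∩ C²((0,∞)) with φ(0) = 0, φ'(0) = 0, φ' increasing and positive on (0,∞), satisfying p ≤ s·φ''(s)/φ'(s) + 1 ≤ q for all s > 0, where 1 < p ≤ q. Then there is a constant c = c(p,q) ≥ 1 such that for all σ ≥ 0 and all s ≥ 0: φ(s) ≤ φ(σ+s), c⁻¹·φ(σ+s) ≤ φ_σ(s) + φ(σ), and φ_σ(s) + φ(σ) ≤ c·φ(σ+s). -/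
open MeasureTheory Real Set Filter
open scoped InnerProductSpace

/-- An N-function `φ` of class `C¹([0,∞)) ∩ C²((0,∞))` with (right) derivative `φ'`
and second derivative `φ''` on `(0,∞)`, satisfying `φ(0) = 0`, `φ'(0) = 0`, `φ'`
increasing and positive on `(0,∞)`, and the index condition
`p ≤ s·φ''(s)/φ'(s) + 1 ≤ q` for all `s > 0`. -/
structure IsNFun (φ φ' φ'' : ℝ → ℝ) (p q : ℝ) : Prop where
  map_zero : φ 0 = 0
  nonneg : ∀ s : ℝ, 0 ≤ s → 0 ≤ φ s
  hasDeriv : ∀ s ∈ Set.Ici (0:ℝ), HasDerivWithinAt φ (φ' s) (Set.Ici 0) s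
  derivCont : ContinuousOn φ' (Set.Ici 0)
  hasDeriv2 : ∀ s ∈ Set.Ioi (0:ℝ), HasDerivWithinAt φ' (φ'' s) (Set.Ioi 0) s
  deriv2Cont : ContinuousOn φ'' (Set.Ioi 0)
  deriv_zero : φ' 0 = 0
  deriv_mono : MonotoneOn φ' (Set.Ici 0)
  deriv_pos : ∀ s : ℝ, 0 < s → 0 < φ' s
  idx_low : ∀ s : ℝ, 0 < s → p ≤ s * φ'' s / φ' s + 1
  idx_high : ∀ s : ℝ, 0 < s → s * φ'' s / φ' s + 1 ≤ q

/-- The shifted N-function `φ_σ(s) = ∫₀^s φ'(σ+t)·t/(σ+t) dt`, expressed through the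
derivative `φ'` of `φ`. -/
noncomputable def shifted (φ' : ℝ → ℝ) (σ s : ℝ) : ℝ :=
  ∫ t in (0:ℝ)..s, φ' (σ + t) * t / (σ + t)

/-!
The weight `t/(σ+t)` lies in `[0,1]`, so `φ_σ(s) + φ(σ) ≤ φ(σ+s)`. For the reverse bound,
if `s ≤ σ` then `φ(σ+s) ≤ φ(2σ) ≤ 2^q φ(σ)`, the doubling coming from `t φ'(t) ≤ q φ(t)`,
i.e. from `t ↦ t^(-q) φ(t)` being antitone. If `σ ≤ s` the weight is at least `1/3` on
`[s/2, s]`, and convexity of `φ` bounds `φ(σ + s/2)` by `3/4 · φ(σ+s)`, so `φ(σ+s) ≤ 12 φ_σ(s)`.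
-/

namespace IsNFun

variable {p q : ℝ} {φ φ' φ'' : ℝ → ℝ}

lemma continuousOn (h : IsNFun φ φ' φ'' p q) : ContinuousOn φ (Ici 0) :=
  fun x hx => (h.hasDeriv x hx).continuousWithinAt

lemma hasDerivAt (h : IsNFun φ φ' φ'' p q) {x : ℝ} (hx : 0 < x) : HasDerivAt φ (φ' x) x :=
  (h.hasDeriv x hx.le).hasDerivAt (Ici_mem_nhds hx)

lemma hasDerivAt_deriv (h : IsNFun φ φ' φ'' p q) {x : ℝ} (hx : 0 < x) :
    HasDerivAt φ' (φ'' x) x :=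
  (h.hasDeriv2 x hx).hasDerivAt (Ioi_mem_nhds hx)

lemma deriv_nonneg (h : IsNFun φ φ' φ'' p q) {t : ℝ} (ht : 0 ≤ t) : 0 ≤ φ' t :=
  h.deriv_zero ▸ h.deriv_mono self_mem_Ici ht ht

lemma monotoneOn (h : IsNFun φ φ' φ'' p q) : MonotoneOn φ (Ici 0) :=
  monotoneOn_of_hasDerivWithinAt_nonneg (convex_Ici 0) h.continuousOn
    (fun x hx => (h.hasDerivAt (by rwa [interior_Ici] at hx)).hasDerivWithinAt)
    (fun x hx => h.deriv_nonneg (interior_subset hx))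

lemma convexOn (h : IsNFun φ φ' φ'' p q) : ConvexOn ℝ (Ici 0) φ := by
  have hderiv : EqOn (deriv φ) φ' (Ioi 0) := fun x hx => (h.hasDerivAt hx).deriv
  refine MonotoneOn.convexOn_of_deriv (convex_Ici 0) h.continuousOn ?_ ?_ <;>
    rw [interior_Ici]
  · exact fun x hx => (h.hasDerivAt hx).differentiableAt.differentiableWithinAt
  · exact (h.deriv_mono.mono Ioi_subset_Ici_self).congr hderiv.symm

lemma map_mul_le_mul (h : IsNFun φ φ' φ'' p q) {c r : ℝ} (hc₀ : 0 ≤ c) (hc₁ : c ≤ 1)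
    (hr : 0 ≤ r) : φ (c * r) ≤ c * φ r := by
  have := h.convexOn.2 self_mem_Ici (mem_Ici.2 hr) (sub_nonneg.2 hc₁) hc₀ (by ring)
  simpa [h.map_zero] using this

lemma integral_deriv (h : IsNFun φ φ' φ'' p q) {a b : ℝ} (ha : 0 ≤ a) (hab : a ≤ b) :
    ∫ t in a..b, φ' t = φ b - φ a := by
  have hsub : Icc a b ⊆ Ici 0 := fun x hx => ha.trans hx.1
  exact intervalIntegral.integral_eq_sub_of_hasDeriv_right_of_le hab
    (h.continuousOn.mono hsub)
    (fun x hx => (h.hasDerivAt (ha.trans_lt hx.1)).hasDerivWithinAt)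
    ((h.derivCont.mono (by rwa [uIcc_of_le hab])).intervalIntegrable)

lemma integral_deriv_add (h : IsNFun φ φ' φ'' p q) {σ a b : ℝ} (ha : 0 ≤ σ + a)
    (hab : a ≤ b) : ∫ t in a..b, φ' (σ + t) = φ (σ + b) - φ (σ + a) := by
  rw [intervalIntegral.integral_comp_add_left φ' σ]
  exact h.integral_deriv ha (by linarith)

/-- The upper index bound `t φ''(t) ≤ (q - 1) φ'(t)` makes `t φ'(t) - q φ(t)` antitone. -/
lemma mul_deriv_le (h : IsNFun φ φ' φ'' p q) {t : ℝ} (ht : 0 ≤ t) : t * φ' t ≤ q * φ t := by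
  have hanti : AntitoneOn (fun t => t * φ' t - q * φ t) (Ici 0) := by
    refine antitoneOn_of_hasDerivWithinAt_nonpos (convex_Ici 0)
      ((continuousOn_id.mul h.derivCont).sub (continuousOn_const.mul h.continuousOn))
      (f' := fun x => 1 * φ' x + x * φ'' x - q * φ' x) (fun x hx => ?_) (fun x hx => ?_) <;>
      rw [interior_Ici] at hx
    · exact (((hasDerivAt_id x).mul (h.hasDerivAt_deriv hx)).sub
        ((h.hasDerivAt hx).const_mul q)).hasDerivWithinAt
    · have hidx : x * φ'' x ≤ (q - 1) * φ' x :=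
        (div_le_iff₀ (h.deriv_pos x hx)).1 (by linarith [h.idx_high x hx])
      linarith
  simpa [h.map_zero, h.deriv_zero] using hanti self_mem_Ici ht ht

lemma antitoneOn_rpow_neg_mul (h : IsNFun φ φ' φ'' p q) :
    AntitoneOn (fun t => t ^ (-q) * φ t) (Ioi 0) := by
  refine antitoneOn_of_hasDerivWithinAt_nonpos (convex_Ioi 0)
    (fun x hx => ((continuousAt_rpow_const x (-q) (Or.inl (ne_of_gt hx))).mul
      (h.hasDerivAt hx).continuousAt).continuousWithinAt)
    (f' := fun x => -q * x ^ (-q - 1) * φ x + x ^ (-q) * φ' x) (fun x hx => ?_)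
    (fun x hx => ?_) <;> rw [interior_Ioi] at hx
  · exact ((hasDerivAt_rpow_const (Or.inl hx.ne')).mul (h.hasDerivAt hx)).hasDerivWithinAt
  · have hsplit : x ^ (-q) = x ^ (-q - 1) * x := by
      rw [← rpow_add_one hx.ne', sub_add_cancel]
    have hexp : 0 ≤ x ^ (-q - 1) := (rpow_pos_of_pos hx _).le
    have := h.mul_deriv_le hx.le
    rw [hsplit]
    nlinarith

lemma map_mul_le_rpow_mul (h : IsNFun φ φ' φ'' p q) {c t : ℝ} (hc : 1 ≤ c) (ht : 0 ≤ t) :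
    φ (c * t) ≤ c ^ q * φ t := by
  rcases ht.eq_or_lt with rfl | ht
  · simp [h.map_zero]
  have hc₀ : 0 < c := by linarith
  have hct : 0 < c * t := mul_pos hc₀ ht
  have hanti := h.antitoneOn_rpow_neg_mul ht hct (le_mul_of_one_le_left ht.le hc)
  simp only [rpow_neg hct.le, rpow_neg ht.le, mul_rpow hc₀.le ht.le, mul_inv] at hanti
  have hcq : 0 < c ^ q := rpow_pos_of_pos hc₀ q
  have htq : 0 < t ^ q := rpow_pos_of_pos ht q
  calc φ (c * t) = c ^ q * t ^ q * ((c ^ q)⁻¹ * (t ^ q)⁻¹ * φ (c * t)) := by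
        field_simp
    _ ≤ c ^ q * t ^ q * ((t ^ q)⁻¹ * φ t) := by gcongr
    _ = c ^ q * φ t := by field_simp

end IsNFun

section Shifted

variable {p q : ℝ} {φ φ' φ'' : ℝ → ℝ}

lemma continuousOn_shifted_integrand (h : IsNFun φ φ' φ'' p q) {σ : ℝ} (hσ : 0 ≤ σ) :
    ContinuousOn (fun t => φ' (σ + t) * t / (σ + t)) (Ici 0) := by
  have hcomp : ContinuousOn (fun t => φ' (σ + t)) (Ici 0) :=
    h.derivCont.comp (continuous_const.add continuous_id).continuousOn
      (fun t ht => mem_Ici.2 (add_nonneg hσ ht))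
  rcases hσ.eq_or_lt with rfl | hσ
  · refine h.derivCont.congr fun t ht => ?_
    rcases (mem_Ici.1 ht).eq_or_lt with rfl | ht
    · simp [h.deriv_zero]
    · simp [ht.ne']
  · exact (hcomp.mul continuousOn_id).div (continuous_const.add continuous_id).continuousOn
      (fun t ht => (add_pos_of_pos_of_nonneg hσ ht).ne')

lemma intervalIntegrable_shifted_integrand (h : IsNFun φ φ' φ'' p q) {σ a b : ℝ}
    (hσ : 0 ≤ σ) (ha : 0 ≤ a) (hab : a ≤ b) :
    IntervalIntegrable (fun t => φ' (σ + t) * t / (σ + t)) volume a b :=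
  ((continuousOn_shifted_integrand h hσ).mono
    (by rw [uIcc_of_le hab]; exact fun x hx => ha.trans hx.1)).intervalIntegrable

lemma intervalIntegrable_deriv_add (h : IsNFun φ φ' φ'' p q) {σ a b : ℝ}
    (ha : 0 ≤ σ + a) (hab : a ≤ b) :
    IntervalIntegrable (fun t => φ' (σ + t)) volume a b :=
  ContinuousOn.intervalIntegrable <| by
    rw [uIcc_of_le hab]
    exact h.derivCont.comp (continuous_const.add continuous_id).continuousOn
      fun t (ht : t ∈ Icc a b) => mem_Ici.2 (by linarith [ht.1])

lemma shifted_nonneg (h : IsNFun φ φ' φ'' p q) {σ s : ℝ} (hσ : 0 ≤ σ) (hs : 0 ≤ s) :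
    0 ≤ shifted φ' σ s :=
  intervalIntegral.integral_nonneg hs fun _ ht =>
    div_nonneg (mul_nonneg (h.deriv_nonneg (add_nonneg hσ ht.1)) ht.1) (add_nonneg hσ ht.1)

lemma shifted_add_le (h : IsNFun φ φ' φ'' p q) {σ s : ℝ} (hσ : 0 ≤ σ) (hs : 0 ≤ s) :
    shifted φ' σ s + φ σ ≤ φ (σ + s) := by
  have hle : shifted φ' σ s ≤ ∫ t in (0:ℝ)..s, φ' (σ + t) := by
    refine intervalIntegral.integral_mono_on hs
      (intervalIntegrable_shifted_integrand h hσ le_rfl hs)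
      (intervalIntegrable_deriv_add h (by simpa using hσ) hs) fun t ht => ?_
    rw [mul_div_assoc]
    exact mul_le_of_le_one_right (h.deriv_nonneg (add_nonneg hσ ht.1))
      (div_le_one_of_le₀ (le_add_of_nonneg_left hσ) (add_nonneg hσ ht.1))
  rw [h.integral_deriv_add (by simpa using hσ) hs, add_zero] at hle
  linarith

lemma map_add_le_twelve_mul_shifted (h : IsNFun φ φ' φ'' p q) {σ s : ℝ} (hσ : 0 ≤ σ)
    (hσs : σ ≤ s) : φ (σ + s) ≤ 12 * shifted φ' σ s := by
  have hs : 0 ≤ s := hσ.trans hσs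
  have hsplit : shifted φ' σ s = (∫ t in (0:ℝ)..(s / 2), φ' (σ + t) * t / (σ + t))
      + ∫ t in (s / 2)..s, φ' (σ + t) * t / (σ + t) :=
    (intervalIntegral.integral_add_adjacent_intervals
      (intervalIntegrable_shifted_integrand h hσ le_rfl (by linarith))
      (intervalIntegrable_shifted_integrand h hσ (by linarith) (by linarith))).symm
  have hhead : 0 ≤ ∫ t in (0:ℝ)..(s / 2), φ' (σ + t) * t / (σ + t) :=
    shifted_nonneg h hσ (by linarith)
  have htail : (φ (σ + s) - φ (σ + s / 2)) / 3
      ≤ ∫ t in (s / 2)..s, φ' (σ + t) * t / (σ + t) := by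
    rw [← h.integral_deriv_add (by linarith) (by linarith), ← intervalIntegral.integral_div]
    refine intervalIntegral.integral_mono_on_of_le_Ioo (by linarith)
      ((intervalIntegrable_deriv_add h (by linarith) (by linarith)).div_const 3)
      (intervalIntegrable_shifted_integrand h hσ (by linarith) (by linarith)) fun t ht => ?_
    have hst : 0 < σ + t := by linarith [ht.1]
    have hφ' := h.deriv_nonneg hst.le
    rw [le_div_iff₀ hst]
    nlinarith [mul_nonneg hφ' (show 0 ≤ 3 * t - (σ + t) by linarith [ht.1])]
  have hmid : φ (σ + s / 2) ≤ 3 / 4 * φ (σ + s) :=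
    calc φ (σ + s / 2) ≤ φ (3 / 4 * (σ + s)) :=
          h.monotoneOn (mem_Ici.2 (by linarith)) (mem_Ici.2 (by linarith)) (by linarith)
      _ ≤ 3 / 4 * φ (σ + s) := h.map_mul_le_mul (by norm_num) (by norm_num) (by linarith)
  linarith

lemma map_add_le_max_mul_shifted_add (h : IsNFun φ φ' φ'' p q) {σ s : ℝ} (hσ : 0 ≤ σ)
    (hs : 0 ≤ s) : φ (σ + s) ≤ max (2 ^ q) 12 * (shifted φ' σ s + φ σ) := by
  have hshift := shifted_nonneg h hσ hs
  have hφσ := h.nonneg σ hσ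
  rcases le_total s σ with hsσ | hσs
  · calc φ (σ + s) ≤ φ (2 * σ) :=
          h.monotoneOn (mem_Ici.2 (by linarith)) (mem_Ici.2 (by linarith)) (by linarith)
      _ ≤ 2 ^ q * φ σ := h.map_mul_le_rpow_mul one_le_two hσ
      _ ≤ max (2 ^ q) 12 * (shifted φ' σ s + φ σ) := by gcongr <;> simp [hshift]
  · calc φ (σ + s) ≤ 12 * shifted φ' σ s := map_add_le_twelve_mul_shifted h hσ hσs
      _ ≤ max (2 ^ q) 12 * (shifted φ' σ s + φ σ) := by gcongr <;> simp [hφσ]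

end Shifted

theorem shift_change_equivalence_general (p q : ℝ) (φ φ' φ'' : ℝ → ℝ)
    (h : IsNFun φ φ' φ'' p q) :
    ∃ c : ℝ, 1 ≤ c ∧ ∀ σ s : ℝ, 0 ≤ σ → 0 ≤ s →
      φ s ≤ φ (σ + s) ∧
      c⁻¹ * φ (σ + s) ≤ shifted φ' σ s + φ σ ∧
      shifted φ' σ s + φ σ ≤ c * φ (σ + s) := by
  have hc : 1 ≤ max (2 ^ q) (12 : ℝ) := le_max_of_le_right (by norm_num)
  refine ⟨max (2 ^ q) 12, hc, fun σ s hσ hs => ⟨?_, ?_, ?_⟩⟩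
  · exact h.monotoneOn (mem_Ici.2 hs) (mem_Ici.2 (by linarith)) (by linarith)
  · rw [inv_mul_le_iff₀ (by linarith)]
    exact map_add_le_max_mul_shifted_add h hσ hs
  · exact (shifted_add_le h hσ hs).trans
      (le_mul_of_one_le_left (h.nonneg _ (add_nonneg hσ hs)) hc)

/-- For an N-function `φ` with index condition `p ≤ s·φ''(s)/φ'(s)+1 ≤ q` (`1 < p ≤ q`):
`φ(s) ≤ φ(σ+s)` and `φ(σ+s) ∼ φ_σ(s) + φ(σ)` uniformly for `σ, s ≥ 0`,
with constant depending only on `p, q`. -/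
theorem shift_change_equivalence (p q : ℝ) (φ φ' φ'' : ℝ → ℝ)
    (hp : 1 < p) (hpq : p ≤ q) (h : IsNFun φ φ' φ'' p q) :
    ∃ c : ℝ, 1 ≤ c ∧ ∀ σ s : ℝ, 0 ≤ σ → 0 ≤ s →
      φ s ≤ φ (σ + s) ∧
      c⁻¹ * φ (σ + s) ≤ shifted φ' σ s + φ σ ∧
      shifted φ' σ s + φ σ ≤ c * φ (σ + s) :=
  shift_change_equivalence_general p q φ φ' φ'' h
end

section
/- Let 1 < p ≤ q, a ≥ 0, 0 < ν ≤ L, and set H(s) = s^p + a·s^q. Let A : ℝ^{N×n} → ℝ^{N×n} be differentiable and satisfy, for all ξ, λ ∈ ℝ^{N×n}: |A(ξ)| + (1+|ξ|)·|DA(ξ)| ≤ L·H'(1+|ξ|) and [DA(ξ)λ] : λ ≥ ν·H''(1+|ξ|)·|λ|². Then there is a constant c = c(p,q,ν,L) ≥ 1 such that for all P, Q ∈ ℝ^{N×n}: c⁻¹·H'_{1+|Q|}(|P−Q|) ≤ |A(P) − A(Q)| ≤ c·H'_{1+|Q|}(|P−Q|), where H_σ is the shifted N-function of H with shift σ, i.e.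 H_σ'(s) = H'(σ+s)·s/(σ+s). -/
open MeasureTheory Real Set
open scoped InnerProductSpace

/-- First derivative `H'(s) = p·s^{p−1} + a·q·s^{q−1}` of the double phase function
`H(s) = s^p + a·s^q`. -/
noncomputable def dpH' (p q a s : ℝ) : ℝ :=
  p * s ^ (p - 1) + a * q * s ^ (q - 1)

/-- Second derivative `H''(s) = p(p−1)s^{p−2} + a·q(q−1)s^{q−2}`. -/
noncomputable def dpH'' (p q a s : ℝ) : ℝ :=
  p * (p - 1) * s ^ (p - 2) + a * q * (q - 1) * s ^ (q - 2)

/-!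
Write `y = 1 + ‖Q‖ + ‖P - Q‖`. For the upper bound: if `2‖P - Q‖ ≤ 1 + ‖Q‖`, then `1 + ‖ξ‖` is
comparable to `y` on the ball around `Q` through `P`, so `‖DA(ξ)‖ ≲ H'(y)/y` there and the mean
value inequality applies; otherwise `y ≤ 3‖P - Q‖` and the bound `‖A(P)‖ + ‖A(Q)‖ ≲ H'(y)` is
already good enough.

For the lower bound, test against `P - Q`: the derivative of `t ↦ ⟪A(Q + t(P - Q)), P - Q⟫` is
nonnegative on `[0, 1]` and at least `ν‖P - Q‖² H''(y) / 12^q` on a quarter of `[0, 1]` where the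
segment keeps distance `‖P - Q‖/4` from the origin (there `y/12 ≤ 1 + |ξ| ≤ y`). Cauchy–Schwarz and
`(p - 1) H'(y) ≤ y H''(y)` conclude.
-/

/-- `H'_σ(s) = H'(σ + s)·s/(σ + s)`, the derivative of the shifted N-function `H_σ`. -/
noncomputable def shiftedDpH' (p q a σ s : ℝ) : ℝ :=
  dpH' p q a (σ + s) * s / (σ + s)

section Scalar

variable {p q a : ℝ}

lemma rpow_le_mul_rpow_of_div_le {k x y r : ℝ} (hk : 1 ≤ k) (hy : 0 < y) (hyx : y / k ≤ x)
    (hxy : x ≤ y) (hr : -1 ≤ r) : x ^ r ≤ k * y ^ r := by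
  have hx : 0 < x := (div_pos hy (by linarith)).trans_le hyx
  rcases le_or_gt 0 r with hr0 | hr0
  · calc x ^ r ≤ y ^ r := Real.rpow_le_rpow hx.le hxy hr0
      _ ≤ k * y ^ r := le_mul_of_one_le_left (by positivity) hk
  · calc x ^ r ≤ (y / k) ^ r := Real.rpow_le_rpow_of_nonpos (by positivity) hyx hr0.le
      _ = k ^ (-r) * y ^ r := by
        rw [Real.div_rpow hy.le (by linarith), Real.rpow_neg (by linarith)]; ring
      _ ≤ k * y ^ r := by
        gcongr
        simpa using Real.rpow_le_rpow_of_exponent_le hk (by linarith : -r ≤ 1)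

lemma rpow_le_rpow_mul_rpow_of_div_le {k x y r R : ℝ} (hk : 1 ≤ k) (hy : 0 < y)
    (hyx : y / k ≤ x) (hxy : x ≤ y) (hrR : r ≤ R) (hR : 0 ≤ R) : y ^ r ≤ k ^ R * x ^ r := by
  have hx : 0 < x := (div_pos hy (by linarith)).trans_le hyx
  rcases le_or_gt 0 r with hr0 | hr0
  · calc y ^ r = k ^ r * (y / k) ^ r := by
          rw [Real.div_rpow hy.le (by linarith)]; field_simp
      _ ≤ k ^ R * x ^ r := by gcongr
  · calc y ^ r ≤ x ^ r := Real.rpow_le_rpow_of_nonpos hx hxy hr0.le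
      _ ≤ k ^ R * x ^ r := le_mul_of_one_le_left (by positivity) (Real.one_le_rpow hk hR)

lemma dpH'_nonneg (hp : 0 ≤ p) (hq : 0 ≤ q) (ha : 0 ≤ a) {x : ℝ} (hx : 0 ≤ x) :
    0 ≤ dpH' p q a x := by
  unfold dpH'; positivity

lemma dpH'_pos (hp : 0 < p) (hq : 0 ≤ q) (ha : 0 ≤ a) {x : ℝ} (hx : 0 < x) :
    0 < dpH' p q a x := by
  unfold dpH'; positivity

lemma dpH''_nonneg (hp : 1 ≤ p) (hq : 1 ≤ q) (ha : 0 ≤ a) {x : ℝ} (hx : 0 ≤ x) :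
    0 ≤ dpH'' p q a x := by
  have : 0 ≤ p - 1 := by linarith
  have : 0 ≤ q - 1 := by linarith
  unfold dpH''; positivity

lemma dpH'_monotoneOn (hp : 1 ≤ p) (hq : 1 ≤ q) (ha : 0 ≤ a) :
    MonotoneOn (dpH' p q a) (Ici 0) := by
  intro x hx y _ hxy
  unfold dpH'
  gcongr

lemma dpH'_div_self {x : ℝ} (hx : x ≠ 0) :
    dpH' p q a x / x = p * x ^ (p - 2) + a * q * x ^ (q - 2) := by
  rw [dpH', div_eq_iff hx, show p - 1 = p - 2 + 1 by ring, show q - 1 = q - 2 + 1 by ring,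
    Real.rpow_add_one hx, Real.rpow_add_one hx]
  ring

lemma dpH'_div_le_mul_div_of_div_le (hp : 1 ≤ p) (hq : 1 ≤ q) (ha : 0 ≤ a) {k x y : ℝ}
    (hk : 1 ≤ k) (hy : 0 < y) (hyx : y / k ≤ x) (hxy : x ≤ y) :
    dpH' p q a x / x ≤ k * (dpH' p q a y / y) := by
  have hx : 0 < x := (div_pos hy (by linarith)).trans_le hyx
  rw [dpH'_div_self hx.ne', dpH'_div_self hy.ne']
  have hpx := rpow_le_mul_rpow_of_div_le hk hy hyx hxy (show -1 ≤ p - 2 by linarith)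
  have hqx := rpow_le_mul_rpow_of_div_le hk hy hyx hxy (show -1 ≤ q - 2 by linarith)
  have := mul_le_mul_of_nonneg_left hpx (by linarith : 0 ≤ p)
  have := mul_le_mul_of_nonneg_left hqx (by positivity : 0 ≤ a * q)
  linarith

lemma dpH''_le_rpow_mul_of_div_le (hp : 1 ≤ p) (hpq : p ≤ q) (ha : 0 ≤ a) {k x y : ℝ}
    (hk : 1 ≤ k) (hy : 0 < y) (hyx : y / k ≤ x) (hxy : x ≤ y) :
    dpH'' p q a y ≤ k ^ q * dpH'' p q a x := by
  have hpy := rpow_le_rpow_mul_rpow_of_div_le hk hy hyx hxy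
    (show p - 2 ≤ q by linarith) (show 0 ≤ q by linarith)
  have hqy := rpow_le_rpow_mul_rpow_of_div_le hk hy hyx hxy
    (show q - 2 ≤ q by linarith) (show 0 ≤ q by linarith)
  have := mul_le_mul_of_nonneg_left hpy (by nlinarith : 0 ≤ p * (p - 1))
  have := mul_le_mul_of_nonneg_left hqy
    (mul_nonneg (mul_nonneg ha (by linarith)) (by linarith) : 0 ≤ a * q * (q - 1))
  unfold dpH''
  linarith

lemma sub_one_mul_dpH'_le_mul_dpH'' (hpq : p ≤ q) (hq : 0 ≤ q) (ha : 0 ≤ a) {x : ℝ}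
    (hx : 0 < x) : (p - 1) * dpH' p q a x ≤ x * dpH'' p q a x := by
  have key : x * dpH'' p q a x - (p - 1) * dpH' p q a x = a * q * (q - p) * x ^ (q - 1) := by
    rw [dpH', dpH'', show p - 1 = p - 2 + 1 by ring, show q - 1 = q - 2 + 1 by ring,
      Real.rpow_add_one hx.ne', Real.rpow_add_one hx.ne']
    ring
  have : 0 ≤ a * q * (q - p) * x ^ (q - 1) :=
    mul_nonneg (mul_nonneg (mul_nonneg ha hq) (by linarith)) (by positivity)
  linarith

end Scalar

lemma mul_sub_le_sub_of_hasDerivAt {g g' : ℝ → ℝ} {a b j k m : ℝ}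
    (hg : ∀ t, HasDerivAt g (g' t) t) (hnonneg : ∀ t ∈ Ioo a b, 0 ≤ g' t)
    (hm : ∀ t ∈ Ioo j k, m ≤ g' t) (haj : a ≤ j) (hjk : j ≤ k) (hkb : k ≤ b) :
    m * (k - j) ≤ g b - g a := by
  have hcont : Continuous g := continuous_iff_continuousAt.2 fun t ↦ (hg t).continuousAt
  have hdiff : Differentiable ℝ g := fun t ↦ (hg t).differentiableAt
  have hderiv : ∀ t, deriv g t = g' t := fun t ↦ (hg t).deriv
  have hmono : MonotoneOn g (Icc a b) :=
    monotoneOn_of_deriv_nonneg (convex_Icc a b) hcont.continuousOn hdiff.differentiableOn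
      (by simpa [interior_Icc, hderiv] using hnonneg)
  have hjk' : m * (k - j) ≤ g k - g j :=
    (convex_Icc j k).mul_sub_le_image_sub_of_le_deriv hcont.continuousOn
      hdiff.differentiableOn (by simpa [interior_Icc, hderiv] using hm) j
      (left_mem_Icc.2 hjk) k (right_mem_Icc.2 hjk) hjk
  have hb : g k ≤ g b := hmono ⟨by linarith, hkb⟩ ⟨by linarith, le_rfl⟩ hkb
  have ha : g a ≤ g j := hmono ⟨le_rfl, by linarith⟩ ⟨haj, by linarith⟩ haj
  linarith

section Segment

variable {E : Type*} [NormedAddCommGroup E] [InnerProductSpace ℝ E]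

lemma abs_inner_add_smul_le (Q v : E) (t : ℝ) :
    |⟪Q, v⟫_ℝ + t * ‖v‖ ^ 2| ≤ ‖Q + t • v‖ * ‖v‖ := by
  simpa [inner_add_left, real_inner_smul_left, real_inner_self_eq_norm_sq]
    using abs_real_inner_le_norm (Q + t • v) v

lemma exists_quarter_le_norm_add_smul (Q v : E) :
    ∃ j ∈ Icc (0 : ℝ) (3 / 4), ∀ t ∈ Icc j (j + 1 / 4), ‖v‖ / 4 ≤ ‖Q + t • v‖ := by
  suffices ∃ j ∈ Icc (0 : ℝ) (3 / 4), ∀ t ∈ Icc j (j + 1 / 4),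
      ‖v‖ ^ 2 / 4 ≤ |⟪Q, v⟫_ℝ + t * ‖v‖ ^ 2| by
    obtain ⟨j, hj, hquarter⟩ := this
    refine ⟨j, hj, fun t ht ↦ ?_⟩
    have h := (hquarter t ht).trans (abs_inner_add_smul_le Q v t)
    rcases (norm_nonneg v).eq_or_lt with hv | hv
    · rw [← hv, zero_div]; exact norm_nonneg _
    · nlinarith
  rcases le_or_gt 0 (⟪Q, v⟫_ℝ + ‖v‖ ^ 2 / 2) with hmid | hmid
  · refine ⟨3 / 4, by norm_num, fun t ht ↦ ?_⟩
    rw [abs_of_nonneg (by nlinarith [ht.1, sq_nonneg ‖v‖])]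
    nlinarith [ht.1, sq_nonneg ‖v‖]
  · refine ⟨0, by norm_num, fun t ht ↦ ?_⟩
    rw [abs_of_neg (by nlinarith [ht.2, sq_nonneg ‖v‖])]
    nlinarith [ht.2, sq_nonneg ‖v‖]

end Segment

section Upper

variable {p q a : ℝ}

lemma shiftedDpH'_nonneg (hp : 0 ≤ p) (hq : 0 ≤ q) (ha : 0 ≤ a) {σ s : ℝ} (hσ : 0 ≤ σ)
    (hs : 0 ≤ s) : 0 ≤ shiftedDpH' p q a σ s :=
  div_nonneg (mul_nonneg (dpH'_nonneg hp hq ha (by linarith)) hs) (by linarith)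

theorem norm_sub_le_shiftedDpH' {E F : Type*} [NormedAddCommGroup E] [NormedSpace ℝ E]
    [NormedAddCommGroup F] [NormedSpace ℝ F] {L : ℝ} (hp : 1 ≤ p) (hq : 1 ≤ q) (ha : 0 ≤ a)
    {A : E → F} (hA : Differentiable ℝ A)
    (hgrowth : ∀ ξ, ‖A ξ‖ + (1 + ‖ξ‖) * ‖fderiv ℝ A ξ‖ ≤ L * dpH' p q a (1 + ‖ξ‖)) (P Q : E) :
    ‖A P - A Q‖ ≤ 6 * L * shiftedDpH' p q a (1 + ‖Q‖) ‖P - Q‖ := by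
  set s := ‖P - Q‖
  set σ := 1 + ‖Q‖
  have hσ : 1 ≤ σ := le_add_of_nonneg_right (norm_nonneg Q)
  have hy : 0 < σ + s := by positivity
  have hHy : 0 ≤ dpH' p q a (σ + s) := dpH'_nonneg (by linarith) (by linarith) ha hy.le
  have hL : 0 ≤ L := nonneg_of_mul_nonneg_left
    ((by positivity : 0 ≤ ‖A Q‖ + σ * ‖fderiv ℝ A Q‖).trans (hgrowth Q))
    (dpH'_pos (by linarith) (by linarith) ha (by linarith))
  rcases le_or_gt (2 * s) σ with hnear | hfar
  · have hderiv : ∀ ξ ∈ Metric.closedBall Q s,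
        ‖fderiv ℝ A ξ‖ ≤ L * (3 * (dpH' p q a (σ + s) / (σ + s))) := by
      intro ξ hξ
      have hdist := (abs_norm_sub_norm_le ξ Q).trans (mem_closedBall_iff_norm.1 hξ)
      have hx : 0 < 1 + ‖ξ‖ := by positivity
      calc ‖fderiv ℝ A ξ‖ ≤ L * (dpH' p q a (1 + ‖ξ‖) / (1 + ‖ξ‖)) := by
            rw [mul_div_assoc', le_div_iff₀ hx]
            nlinarith [hgrowth ξ, norm_nonneg (A ξ)]
        _ ≤ L * (3 * (dpH' p q a (σ + s) / (σ + s))) := by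
            gcongr
            exact dpH'_div_le_mul_div_of_div_le hp hq ha (by norm_num) hy
              (by linarith [(abs_le.1 hdist).1]) (by linarith [(abs_le.1 hdist).2])
    calc ‖A P - A Q‖ ≤ L * (3 * (dpH' p q a (σ + s) / (σ + s))) * s :=
          (convex_closedBall Q s).norm_image_sub_le_of_norm_fderiv_le (fun ξ _ ↦ hA ξ) hderiv
            (Metric.mem_closedBall_self (norm_nonneg _)) (mem_closedBall_iff_norm.2 le_rfl)
      _ ≤ 6 * L * shiftedDpH' p q a σ s := by
          rw [shiftedDpH', mul_div_right_comm]
          have : 0 ≤ L * (dpH' p q a (σ + s) / (σ + s)) * s := by positivity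
          linarith
  · have hbound : ∀ ξ, ‖ξ‖ ≤ ‖Q‖ + s → ‖A ξ‖ ≤ L * dpH' p q a (σ + s) := fun ξ hξ ↦ by
      have hmono := dpH'_monotoneOn hp hq ha (mem_Ici.2 (by positivity : 0 ≤ 1 + ‖ξ‖))
        (mem_Ici.2 hy.le) (by linarith : 1 + ‖ξ‖ ≤ σ + s)
      nlinarith [hgrowth ξ, norm_nonneg (fderiv ℝ A ξ), norm_nonneg ξ]
    have hP : ‖P‖ ≤ ‖Q‖ + s := by simpa using norm_le_norm_add_norm_sub' P Q
    calc ‖A P - A Q‖ ≤ ‖A P‖ + ‖A Q‖ := norm_sub_le _ _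
      _ ≤ 2 * (L * dpH' p q a (σ + s)) := by
          linarith [hbound P hP, hbound Q (by linarith [norm_nonneg (P - Q)])]
      _ ≤ 6 * L * shiftedDpH' p q a σ s := by
          rw [shiftedDpH', mul_div_assoc', le_div_iff₀ hy]
          nlinarith [mul_nonneg hL hHy]

end Upper

section Lower

variable {p q a ν : ℝ} {E : Type*} [NormedAddCommGroup E] [InnerProductSpace ℝ E]

theorem mul_dpH''_le_inner_sub (hp : 1 ≤ p) (hpq : p ≤ q) (ha : 0 ≤ a) (hν : 0 ≤ ν)
    {A : E → E} (hA : Differentiable ℝ A)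
    (hellip : ∀ ξ w : E, ν * dpH'' p q a (1 + ‖ξ‖) * ‖w‖ ^ 2 ≤ ⟪fderiv ℝ A ξ w, w⟫_ℝ) (P Q : E) :
    ν * ‖P - Q‖ ^ 2 * dpH'' p q a (1 + ‖Q‖ + ‖P - Q‖) ≤ 4 * 12 ^ q * ⟪A P - A Q, P - Q⟫_ℝ := by
  set v := P - Q
  set s := ‖v‖
  set y := 1 + ‖Q‖ + s
  have hy : 0 < y := by positivity
  set g' : ℝ → ℝ := fun t ↦ ⟪fderiv ℝ A (Q + t • v) v, v⟫_ℝ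
  have hg : ∀ t, HasDerivAt (fun t ↦ ⟪A (Q + t • v), v⟫_ℝ) (g' t) t := fun t ↦ by
    have hpath : HasDerivAt (fun t : ℝ ↦ Q + t • v) v t := by
      simpa using ((hasDerivAt_id t).smul_const v).const_add Q
    simpa using ((hA _).hasFDerivAt.comp_hasDerivAt t hpath).inner ℝ (hasDerivAt_const t v)
  have hg' : ∀ t, ν * s ^ 2 * dpH'' p q a (1 + ‖Q + t • v‖) ≤ g' t := fun t ↦ by
    linarith [hellip (Q + t • v) v]
  have hnear : ∀ t ∈ Icc (0 : ℝ) 1, |‖Q + t • v‖ - ‖Q‖| ≤ s := fun t ht ↦ by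
    refine (abs_norm_sub_norm_le _ _).trans ?_
    rw [add_sub_cancel_left, norm_smul, Real.norm_of_nonneg ht.1]
    exact mul_le_of_le_one_left (norm_nonneg v) ht.2
  obtain ⟨j, hj, hquarter⟩ := exists_quarter_le_norm_add_smul Q v
  have hnonneg : ∀ t ∈ Ioo (0 : ℝ) 1, 0 ≤ g' t := fun t _ ↦
    (mul_nonneg (by positivity) (dpH''_nonneg hp (hp.trans hpq) ha (by positivity))).trans (hg' t)
  have hm : ∀ t ∈ Ioo j (j + 1 / 4), ν * s ^ 2 * dpH'' p q a y / 12 ^ q ≤ g' t := by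
    intro t ht
    have hdist := abs_le.1 (hnear t ⟨by linarith [hj.1, ht.1], by linarith [hj.2, ht.2]⟩)
    have hquarter_t := hquarter t (Ioo_subset_Icc_self ht)
    -- `y / 12 ≤ 1 + ‖Q + t • v‖` is a convex combination of `hdist` and `hquarter_t`
    have hcomp := dpH''_le_rpow_mul_of_div_le hp hpq ha (by norm_num : (1 : ℝ) ≤ 12) hy
      (by linarith : y / 12 ≤ 1 + ‖Q + t • v‖) (by linarith : 1 + ‖Q + t • v‖ ≤ y)
    rw [div_le_iff₀ (by positivity)]
    nlinarith [mul_le_mul_of_nonneg_left hcomp (by positivity : 0 ≤ ν * s ^ 2),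
      mul_le_mul_of_nonneg_left (hg' t) (by positivity : (0 : ℝ) ≤ 12 ^ q)]
  have key := mul_sub_le_sub_of_hasDerivAt hg hnonneg hm hj.1 (by linarith) (by linarith [hj.2])
  simp only [one_smul, zero_smul, add_zero, add_sub_cancel, v, ← inner_sub_left] at key
  rw [show j + 1 / 4 - j = 1 / 4 by ring, div_mul_eq_mul_div, div_le_iff₀ (by positivity)] at key
  linarith

theorem shiftedDpH'_le_norm_sub (hp : 1 ≤ p) (hpq : p ≤ q) (ha : 0 ≤ a) (hν : 0 ≤ ν)
    {A : E → E} (hA : Differentiable ℝ A)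
    (hellip : ∀ ξ w : E, ν * dpH'' p q a (1 + ‖ξ‖) * ‖w‖ ^ 2 ≤ ⟪fderiv ℝ A ξ w, w⟫_ℝ) (P Q : E) :
    ν * (p - 1) / (4 * 12 ^ q) * shiftedDpH' p q a (1 + ‖Q‖) ‖P - Q‖ ≤ ‖A P - A Q‖ := by
  set s := ‖P - Q‖
  set y := 1 + ‖Q‖ + s
  rcases (norm_nonneg (P - Q)).eq_or_lt with hs | hs
  · simp [shiftedDpH', s, ← hs]
  have hy : 0 < y := by positivity
  have hinner := (mul_dpH''_le_inner_sub hp hpq ha hν hA hellip P Q).trans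
    (mul_le_mul_of_nonneg_left (real_inner_le_norm (A P - A Q) (P - Q)) (by positivity))
  have hnorm : ν * s * dpH'' p q a y ≤ 4 * 12 ^ q * ‖A P - A Q‖ :=
    le_of_mul_le_mul_right (a := s) (by linarith) hs
  have hH := sub_one_mul_dpH'_le_mul_dpH'' hpq (by linarith) ha hy
  rw [shiftedDpH', div_mul_div_comm, div_le_iff₀ (by positivity)]
  calc ν * (p - 1) * (dpH' p q a y * s) = ν * s * ((p - 1) * dpH' p q a y) := by ring
    _ ≤ ν * s * (y * dpH'' p q a y) := by gcongr
    _ = y * (ν * s * dpH'' p q a y) := by ring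
    _ ≤ y * (4 * 12 ^ q * ‖A P - A Q‖) := by gcongr
    _ = ‖A P - A Q‖ * (4 * 12 ^ q * y) := by ring

end Lower

theorem A_difference_equivalence_general (N n : ℕ) (p q ν L : ℝ)
    (hp : 1 < p) (hpq : p ≤ q) (hν : 0 < ν) :
    ∃ c : ℝ, 1 ≤ c ∧ ∀ a : ℝ, 0 ≤ a →
      ∀ A : EuclideanSpace ℝ (Fin N × Fin n) → EuclideanSpace ℝ (Fin N × Fin n),
        Differentiable ℝ A →
        (∀ ξ : EuclideanSpace ℝ (Fin N × Fin n),
          ‖A ξ‖ + (1 + ‖ξ‖) * ‖fderiv ℝ A ξ‖ ≤ L * dpH' p q a (1 + ‖ξ‖)) →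
        (∀ ξ lam : EuclideanSpace ℝ (Fin N × Fin n),
          ν * dpH'' p q a (1 + ‖ξ‖) * ‖lam‖ ^ 2 ≤ ⟪(fderiv ℝ A ξ) lam, lam⟫_ℝ) →
        ∀ P Q : EuclideanSpace ℝ (Fin N × Fin n),
          c⁻¹ * (dpH' p q a ((1 + ‖Q‖) + ‖P - Q‖) * ‖P - Q‖ / ((1 + ‖Q‖) + ‖P - Q‖)) ≤
              ‖A P - A Q‖ ∧
            ‖A P - A Q‖ ≤
              c * (dpH' p q a ((1 + ‖Q‖) + ‖P - Q‖) * ‖P - Q‖ / ((1 + ‖Q‖) + ‖P - Q‖)) := by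
  set K := 4 * 12 ^ q / (ν * (p - 1))
  have hK : 0 < K := div_pos (by positivity) (mul_pos hν (by linarith))
  refine ⟨max 1 (max (6 * L) K), le_max_left _ _, fun a ha A hA hgrowth hellip P Q ↦ ?_⟩
  have hshift : 0 ≤ shiftedDpH' p q a (1 + ‖Q‖) ‖P - Q‖ :=
    shiftedDpH'_nonneg (by linarith) (by linarith) ha (by positivity) (norm_nonneg _)
  constructor
  · calc (max 1 (max (6 * L) K))⁻¹ * shiftedDpH' p q a (1 + ‖Q‖) ‖P - Q‖
        ≤ ν * (p - 1) / (4 * 12 ^ q) * shiftedDpH' p q a (1 + ‖Q‖) ‖P - Q‖ := by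
          gcongr
          rw [← inv_div]
          exact inv_anti₀ hK ((le_max_right _ _).trans (le_max_right _ _))
      _ ≤ ‖A P - A Q‖ := shiftedDpH'_le_norm_sub hp.le hpq ha hν.le hA hellip P Q
  · calc ‖A P - A Q‖ ≤ 6 * L * shiftedDpH' p q a (1 + ‖Q‖) ‖P - Q‖ :=
          norm_sub_le_shiftedDpH' hp.le (hp.le.trans hpq) ha hA hgrowth P Q
      _ ≤ max 1 (max (6 * L) K) * shiftedDpH' p q a (1 + ‖Q‖) ‖P - Q‖ := by
          gcongr
          exact (le_max_left _ _).trans (le_max_right _ _)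

/-- **Comparison of `|A(P) − A(Q)|` with the shifted function.** Let `H(s) = s^p + a·s^q`
with `1 < p ≤ q`, `a ≥ 0`, and let `A : ℝ^{N×n} → ℝ^{N×n}` be differentiable with
`|A(ξ)| + (1+|ξ|)|DA(ξ)| ≤ L·H'(1+|ξ|)` and `[DA(ξ)λ]:λ ≥ ν·H''(1+|ξ|)|λ|²`,
`0 < ν ≤ L`. Then `|A(P) − A(Q)| ∼ H'_{1+|Q|}(|P−Q|)`, where
`H'_σ(s) = H'(σ+s)·s/(σ+s)`, with constants depending only on `p, q, ν, L`. -/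
theorem A_difference_equivalence (N n : ℕ) (p q ν L : ℝ)
    (hp : 1 < p) (hpq : p ≤ q) (hν : 0 < ν) (hνL : ν ≤ L) :
    ∃ c : ℝ, 1 ≤ c ∧ ∀ a : ℝ, 0 ≤ a →
      ∀ A : EuclideanSpace ℝ (Fin N × Fin n) → EuclideanSpace ℝ (Fin N × Fin n),
        Differentiable ℝ A →
        (∀ ξ : EuclideanSpace ℝ (Fin N × Fin n),
          ‖A ξ‖ + (1 + ‖ξ‖) * ‖fderiv ℝ A ξ‖ ≤ L * dpH' p q a (1 + ‖ξ‖)) →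
        (∀ ξ lam : EuclideanSpace ℝ (Fin N × Fin n),
          ν * dpH'' p q a (1 + ‖ξ‖) * ‖lam‖ ^ 2 ≤ ⟪(fderiv ℝ A ξ) lam, lam⟫_ℝ) →
        ∀ P Q : EuclideanSpace ℝ (Fin N × Fin n),
          c⁻¹ * (dpH' p q a ((1 + ‖Q‖) + ‖P - Q‖) * ‖P - Q‖ / ((1 + ‖Q‖) + ‖P - Q‖)) ≤
              ‖A P - A Q‖ ∧
            ‖A P - A Q‖ ≤
              c * (dpH' p q a ((1 + ‖Q‖) + ‖P - Q‖) * ‖P - Q‖ / ((1 + ‖Q‖) + ‖P - Q‖)) :=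
  A_difference_equivalence_general N n p q ν L hp hpq hν
end
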